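/- Let 0 → E_p → E_{p−1} → … → E_1 → E_0 → 0 be a complex of finite free modules over a commutative ring A whose maps are given by matrices, and suppose the induced complex of localizations (or of fibers) is exact at every point of a space. Then the first syzygy map f^1 is surjective onto its pointwise kernel and each f^k has constant rank; in the algebraic formulation: if a bounded complex of finite free modules over a commutative ring A is exact, then the image of each differential is a projective A-module and each differential has locally constant rank. -/

import Mathlib

/-!
Starting from the surjective end, every image `im d n` is a direct summand of `A^{r n}`:
`im d 0` is everything, and if `im d n` is a direct summand it is projective, so `d n` splits
onto it and its kernel `im d (n + 1)` is a direct summand as well. Direct summands are projective,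
and base change preserves them, so `im (κ ⊗ d n) ≅ κ ⊗ im d n`; the dimension of the latter is
the rank at `P` of the finitely generated projective module `im d n`, a locally constant function.
-/

open LinearMap TensorProduct

namespace Submodule

variable {A M : Type*} [CommRing A] [AddCommGroup M] [Module A M] {p : Submodule A M}

theorem projective_of_isComplemented [Module.Projective A M] (hp : IsComplemented p) :
    Module.Projective A p :=
  let ⟨q, hpq⟩ := hp
  .of_split p.subtype (p.projectionOnto q hpq) (by ext; simp)

theorem baseChange_subtype_injective_of_isComplemented (hp : IsComplemented p)
    (B : Type*) [CommRing B] [Algebra A B] : Function.Injective (p.subtype.baseChange B) := by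
  obtain ⟨q, hpq⟩ := hp
  refine Function.LeftInverse.injective (g := (p.projectionOnto q hpq).baseChange B) fun x => ?_
  rw [← LinearMap.comp_apply, ← baseChange_comp, projectionOnto_comp_subtype, baseChange_id,
    id_apply]

end Submodule

namespace LinearMap

variable {A M N : Type*} [CommRing A] [AddCommGroup M] [Module A M] [AddCommGroup N] [Module A N]

theorem isComplemented_ker_of_projective_range (f : M →ₗ[A] N) [Module.Projective A (range f)] :
    IsComplemented (ker f) := by
  obtain ⟨s, hs⟩ := Module.projective_lifting_property f.rangeRestrict .id f.surjective_rangeRestrict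
  have hfs (y : range f) : f (s y) = y := congrArg Subtype.val (LinearMap.congr_fun hs y)
  have hker (x : ker f) : f.rangeRestrict x = 0 := Subtype.ext x.2
  let proj : M →ₗ[A] ker f := codRestrict _ (.id - s ∘ₗ f.rangeRestrict) fun x => by simp [hfs]
  exact ⟨_, isCompl_of_proj (f := proj) fun x => Subtype.ext (by simp [proj, hker])⟩

noncomputable def rangeBaseChangeEquiv (f : M →ₗ[A] N) (hf : IsComplemented (range f))
    (B : Type*) [CommRing B] [Algebra A B] : range (f.baseChange B) ≃ₗ[B] B ⊗[A] range f := by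
  have hrange : range (f.baseChange B) = range ((range f).subtype.baseChange B) := by
    conv_lhs => rw [← f.subtype_comp_codRestrict (range f) f.mem_range_self]
    rw [baseChange_comp, range_comp_of_range_eq_top]
    rw [range_eq_top, baseChange_eq_ltensor]
    exact lTensor_surjective B f.surjective_rangeRestrict
  exact .trans (.ofEq _ _ hrange)
    (LinearEquiv.ofInjective _ (Submodule.baseChange_subtype_injective_of_isComplemented hf B)).symm

end LinearMap

theorem Module.isLocallyConstant_finrank_fiber (A M : Type*) [CommRing A] [AddCommGroup M]
    [Module A M] [Module.Finite A M] [Module.Projective A M] :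
    IsLocallyConstant (fun P : PrimeSpectrum A =>
      letI κ := IsLocalRing.ResidueField (Localization.AtPrime P.asIdeal)
      Module.finrank κ (κ ⊗[A] M)) := by
  have := Module.finitePresentation_of_projective A M
  convert Module.isLocallyConstant_rankAtStalk (R := A) (M := M) using 2 with P
  exact (Module.rankAtStalk_eq P).symm

theorem image_projective_and_locally_constant_rank_of_exact_general
    (A : Type*) [CommRing A] (r : ℕ → ℕ)
    (d : ∀ n : ℕ, ((Fin (r (n + 1)) → A) →ₗ[A] (Fin (r n) → A)))
    (hexact : ∀ n, Function.Exact (d (n + 1)) (d n))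
    (hsurj : Function.Surjective (d 0)) :
    (∀ n, Module.Projective A (LinearMap.range (d n))) ∧
    (∀ n, IsLocallyConstant (fun P : PrimeSpectrum A =>
      letI κ := IsLocalRing.ResidueField (Localization.AtPrime P.asIdeal)
      Module.finrank κ (LinearMap.range (LinearMap.baseChange κ (d n))))) := by
  have hcompl : ∀ n, IsComplemented (range (d n)) := by
    intro n
    induction n with
    | zero => rw [range_eq_top.mpr hsurj]; exact isComplemented_top
    | succ n ih =>
      have := Submodule.projective_of_isComplemented ih
      rw [← (hexact n).linearMap_ker_eq]
      exact isComplemented_ker_of_projective_range (d n)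
  have hproj n := Submodule.projective_of_isComplemented (hcompl n)
  refine ⟨hproj, fun n => ?_⟩
  convert Module.isLocallyConstant_finrank_fiber A (range (d n)) using 2 with P
  exact (rangeBaseChangeEquiv (d n) (hcompl n) _).finrank_eq

/-- If a bounded complex `0 → A^{r_p} → … → A^{r_1} → A^{r_0}` of finite free modules
over a commutative ring `A` is exact (at every spot, including surjectivity onto
`A^{r_0}`), then the image of each differential is a projective `A`-module and each
differential has locally constant rank on `Spec A` (where the rank at a prime is the
rank of the induced map on residue-field fibers). -/
theorem image_projective_and_locally_constant_rank_of_exact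
    (A : Type*) [CommRing A] (r : ℕ → ℕ)
    (d : ∀ n : ℕ, ((Fin (r (n + 1)) → A) →ₗ[A] (Fin (r n) → A)))
    (hcomplex : ∀ n, (d n) ∘ₗ (d (n + 1)) = 0)
    (hbounded : ∃ N, ∀ n, N ≤ n → r n = 0)
    (hexact : ∀ n, Function.Exact (d (n + 1)) (d n))
    (hsurj : Function.Surjective (d 0)) :
    (∀ n, Module.Projective A (LinearMap.range (d n))) ∧
    (∀ n, IsLocallyConstant (fun P : PrimeSpectrum A =>
      letI κ := IsLocalRing.ResidueField (Localization.AtPrime P.asIdeal)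
      Module.finrank κ (LinearMap.range (LinearMap.baseChange κ (d n))))) :=
  image_projective_and_locally_constant_rank_of_exact_general A r d hexact hsurj
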